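/- For every integer n ≥ 1, Σ_{k=0}^{n} J^{(3)}_k = (1/3)·( J^{(3)}_{n+1} + 3·J^{(3)}_n + 2·J^{(3)}_{n−1} − 1 ). -/
import Mathlib


/-- Third order Jacobsthal numbers:
`J₀ = 0, J₁ = J₂ = 1`, `J_{n+3} = J_{n+2} + J_{n+1} + 2 J_n`. -/
def J3 : ℕ → ℚ
  | 0 => 0
  | 1 => 1
  | 2 => 1
  | n + 3 => J3 (n + 2) + J3 (n + 1) + 2 * J3 n

theorem third_order_jacobsthal_sum (n : ℕ) (hn : 1 ≤ n) :
    ∑ k ∈ Finset.range (n + 1), J3 k =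
      (1 / 3) * (J3 (n + 1) + 3 * J3 n + 2 * J3 (n - 1) - 1) := by
  induction n with
  | zero => omega
  | succ m ih =>
    rcases Nat.eq_or_lt_of_le hn with h | h
    · simp [← h]
      norm_num [Finset.sum_range_succ, J3]
    · have hm : 1 ≤ m := by omega
      obtain ⟨p, rfl⟩ : ∃ p, m = p + 1 := ⟨m - 1, by omega⟩
      rw [Finset.sum_range_succ, ih hm]
      show _ = (1/3) * (J3 (p + 3) + 3 * J3 (p + 2) + 2 * J3 (p + 1) - 1)
      rw [show J3 (p + 3) = J3 (p + 2) + J3 (p + 1) + 2 * J3 p from rfl]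
      simp only [Nat.add_sub_cancel]
      ring
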